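/- Suppose w_1, …, w_k ∈ W satisfy Δ⁺ = Φ_{w_1} ⊔ Φ_{w_2} ⊔ ⋯ ⊔ Φ_{w_k} (disjoint union), and suppose u ∈ W satisfies w_i ≤ w_i u in the Bruhat order for every i = 1, …, k. Then for any dominant integral weight λ, the element μ_λ := λ − uλ is neither a root nor a nonzero scalar multiple of a root. -/

import Mathlib

open RealInnerProductSpace

noncomputable section

variable {V : Type*} [NormedAddCommGroup V] [InnerProductSpace ℝ V] [FiniteDimensional ℝ V]

/-- Orthogonal reflection of `V` in the hyperplane orthogonal to `α`. -/
def reflRoot (α : V) : V ≃ₗᵢ[ℝ] V := (ℝ ∙ α)ᗮ.reflection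

/-- The inversion set `Φ_w = w⁻¹Δ⁻ ∩ Δ⁺ = {α ∈ Δ⁺ | w α ∈ Δ⁻}`, where `Δ⁻ = -Δ⁺`
(so `w α ∈ Δ⁻ ↔ -(w α) ∈ Δ⁺`). -/
def invSet (pos : Set V) (w : V ≃ₗᵢ[ℝ] V) : Set V := {α | α ∈ pos ∧ -(w α) ∈ pos}

/-- The length of `w`, i.e. the number of inversions of `w`. -/
def invLen (pos : Set V) (w : V ≃ₗᵢ[ℝ] V) : ℕ := (invSet pos w).ncard

/-- The Bruhat order on the Weyl group: the reflexive-transitive closure of the relation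
`x ⋖ x * s_α` (right multiplication by the reflection in a root `α`) whenever the length
(= number of inversions) increases. -/
def bruhatLE (roots pos : Set V) : (V ≃ₗᵢ[ℝ] V) → (V ≃ₗᵢ[ℝ] V) → Prop :=
  Relation.ReflTransGen
    (fun x y => (∃ α ∈ roots, y = x * reflRoot α) ∧ invLen pos x < invLen pos y)

/-- A reduced crystallographic root system in the real inner product space `V`, together with
a fixed choice of positive roots `pos` (the negative roots being `-pos`). -/
structure RootSystemCtx (V : Type*) [NormedAddCommGroup V] [InnerProductSpace ℝ V]
    [FiniteDimensional ℝ V] where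
  /-- the set of roots `Δ` -/
  roots : Set V
  /-- the set of positive roots `Δ⁺` -/
  pos : Set V
  finite : roots.Finite
  nonzero : ∀ α ∈ roots, α ≠ (0 : V)
  /-- reduced: the only multiples of a root which are roots are `±α` -/
  reduced : ∀ α ∈ roots, ∀ t : ℝ, t • α ∈ roots → t = 1 ∨ t = -1
  /-- crystallographic: `⟨β, α∨⟩ ∈ ℤ` for all roots `α`, `β` -/
  crystallographic : ∀ α ∈ roots, ∀ β ∈ roots, ∃ z : ℤ, 2 * ⟪β, α⟫ / ⟪α, α⟫ = (z : ℝ)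
  /-- the set of roots is stable under the reflection in each root -/
  reflect_mem : ∀ α ∈ roots, ∀ β ∈ roots, reflRoot α β ∈ roots
  pos_subset : pos ⊆ roots
  /-- every root is positive or negative -/
  mem_pos_or : ∀ α ∈ roots, α ∈ pos ∨ -α ∈ pos
  /-- no root is both positive and negative -/
  not_pos_and_neg : ∀ α ∈ pos, -α ∉ pos
  /-- positivity is closed under addition -/
  pos_add : ∀ α ∈ pos, ∀ β ∈ pos, α + β ∈ roots → α + β ∈ pos

namespace RootSystemCtx

variable {V : Type*} [NormedAddCommGroup V] [InnerProductSpace ℝ V] [FiniteDimensional ℝ V]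

/-- The Weyl group `W`: the subgroup of the isometry group of `V` generated by the
reflections in the roots. -/
def weylGroup (C : RootSystemCtx V) : Subgroup (V ≃ₗᵢ[ℝ] V) :=
  Subgroup.closure {g | ∃ α ∈ C.roots, g = reflRoot α}

/-- The simple roots: the positive roots which are not the sum of two positive roots. -/
def simpleRoots (C : RootSystemCtx V) : Set V :=
  {α ∈ C.pos | ¬ ∃ β ∈ C.pos, ∃ γ ∈ C.pos, α = β + γ}

/-- A weight `l` is dominant integral if `⟨l, α∨⟩` is a nonnegative integer for every
simple root `α`. -/
def IsDominant (C : RootSystemCtx V) (l : V) : Prop :=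
  ∀ α ∈ C.simpleRoots, ∃ k : ℕ, 2 * ⟪l, α⟫ / ⟪α, α⟫ = (k : ℝ)

end RootSystemCtx

/-! Bruhat order is compatible with dominant weights: if `x ≤ y` then `x λ - y λ` pairs
nonnegatively with any `v` that is positive on `Δ⁺` (such `v` exists since `Δ⁺` is closed under
addition). Indeed along a step `b ⋖ b s_β` with `β > 0` the root `b β` is positive, otherwise
`s_β` would shorten `b`, and `b λ - b s_β λ = ⟨λ, β∨⟩ b β`.

Suppose `λ - uλ = s β` with `β > 0` and `s ≠ 0`. If `s > 0`, the inequalities `w_i ≤ w_i u` give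
`s ⟪w_i β, v⟫ ≥ 0`, so no `w_i` inverts `β`, contradicting `Δ⁺ = ⋃ Φ_{w_i}`. If `s < 0`, then
`⟪λ - uλ, λ⟫ = s ⟪β, λ⟫ ≤ 0`, whereas `⟪λ - uλ, λ⟫ = ‖λ - uλ‖² / 2 > 0` because `u` is an
isometry. -/

theorem exists_forall_inner_smul_add_pos {F : Type*} [NormedAddCommGroup F]
    [InnerProductSpace ℝ F] {s : Set F} (hs : s.Finite) {a b : F}
    (ha : ∀ x ∈ s, 0 ≤ ⟪x, a⟫) (hb : ∀ x ∈ s, ⟪x, a⟫ = 0 → 0 < ⟪x, b⟫) :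
    ∃ N : ℝ, ∀ x ∈ s, 0 < ⟪x, N • a + b⟫ := by
  have h : ∀ x ∈ s, ∀ᶠ N : ℝ in Filter.atTop, 0 < ⟪x, N • a + b⟫ := by
    intro x hx
    simp only [inner_add_right, real_inner_smul_right]
    rcases (ha x hx).eq_or_lt with h0 | hpos
    · simp [← h0, hb x hx h0.symm]
    · filter_upwards [Filter.eventually_gt_atTop (-⟪x, b⟫ / ⟪x, a⟫)] with N hN
      rw [div_lt_iff₀ hpos] at hN
      linarith
  exact (hs.eventually_all.2 h).exists

theorem real_inner_sub_apply_self {F : Type*} [NormedAddCommGroup F] [InnerProductSpace ℝ F]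
    (u : F ≃ₗᵢ[ℝ] F) (x : F) : ⟪x - u x, x⟫ = ‖x - u x‖ ^ 2 / 2 := by
  rw [norm_sub_sq_real, u.norm_map, inner_sub_left, real_inner_self_eq_norm_sq,
    real_inner_comm]
  ring

section Reflection

variable {E : Type*} [NormedAddCommGroup E] [InnerProductSpace ℝ E]

theorem reflRoot_apply (α x : E) : reflRoot α x = x - (2 * ⟪x, α⟫ / ⟪α, α⟫) • α := by
  rw [reflRoot, Submodule.reflection_orthogonal_apply, Submodule.reflection_singleton_apply,
    real_inner_self_eq_norm_sq, real_inner_comm, neg_sub, two_smul]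
  match_scalars
  · ring
  · simp only [RCLike.ofReal_real_eq_id, id_eq]
    ring

theorem reflRoot_self {α : E} (hα : α ≠ 0) : reflRoot α α = -α := by
  rw [reflRoot_apply, mul_div_assoc, div_self (inner_self_ne_zero.2 hα), mul_one, two_smul]
  abel

theorem reflRoot_reflRoot (α x : E) : reflRoot α (reflRoot α x) = x :=
  Submodule.reflection_involutive _ x

theorem reflRoot_mul_self (α : E) : reflRoot α * reflRoot α = 1 :=
  LinearIsometryEquiv.ext (reflRoot_reflRoot α)

theorem reflRoot_neg (α : E) : reflRoot (-α) = reflRoot α := by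
  ext x
  simp only [reflRoot_apply, inner_neg_right, inner_neg_left, neg_neg, smul_neg, neg_div,
    mul_neg, neg_smul]

end Reflection

namespace RootSystemCtx

variable (C : RootSystemCtx V) {α β : V}

theorem mapsTo_reflRoot (hα : α ∈ C.roots) : Set.MapsTo (reflRoot α) C.roots C.roots :=
  C.reflect_mem α hα

theorem neg_mem_roots (hα : α ∈ C.roots) : -α ∈ C.roots :=
  reflRoot_self (C.nonzero α hα) ▸ C.reflect_mem α hα α hα

theorem inner_self_pos (hα : α ∈ C.roots) : 0 < ⟪α, α⟫ :=
  real_inner_self_pos.2 (C.nonzero α hα)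

theorem add_ne_zero_of_mem_pos (hα : α ∈ C.pos) (hβ : β ∈ C.pos) : α + β ≠ 0 := fun h =>
  C.not_pos_and_neg α hα (neg_eq_of_add_eq_zero_right h ▸ hβ)

theorem exists_mem_pos_reflRoot_eq (hα : α ∈ C.roots) : ∃ β ∈ C.pos, reflRoot β = reflRoot α :=
  (C.mem_pos_or α hα).elim (fun h => ⟨α, h, rfl⟩) fun h => ⟨-α, h, reflRoot_neg α⟩

/-- The integers `⟨α, β∨⟩` and `⟨β, α∨⟩` are negative; if both were `≤ -2` then
`‖α + β‖² ≤ 0`, so one of them is `-1`, and the corresponding reflection sends one of the roots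
to `α + β`. -/
theorem add_mem_roots_of_inner_neg (hα : α ∈ C.roots) (hβ : β ∈ C.roots) (hαβ : ⟪α, β⟫ < 0)
    (hne : α + β ≠ 0) : α + β ∈ C.roots := by
  have hαα := C.inner_self_pos hα
  have hββ := C.inner_self_pos hβ
  obtain ⟨m, hm⟩ := C.crystallographic β hβ α hα
  obtain ⟨n, hn⟩ := C.crystallographic α hα β hβ
  rw [real_inner_comm] at hn
  have hm' : 2 * ⟪α, β⟫ = m * ⟪β, β⟫ := by rw [← hm]; field_simp
  have hn' : 2 * ⟪α, β⟫ = n * ⟪α, α⟫ := by rw [← hn]; field_simp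
  have hm0 : m < 0 := by
    have : (m : ℝ) < 0 := by nlinarith
    exact_mod_cast this
  have hn0 : n < 0 := by
    have : (n : ℝ) < 0 := by nlinarith
    exact_mod_cast this
  have hmn : m = -1 ∨ n = -1 := by
    by_contra! h
    have hm2 : (m : ℝ) ≤ -2 := by exact_mod_cast (show m ≤ -2 by omega)
    have hn2 : (n : ℝ) ≤ -2 := by exact_mod_cast (show n ≤ -2 by omega)
    refine hne (real_inner_self_nonpos.1 ?_)
    rw [inner_add_add_self, real_inner_comm α β]
    nlinarith [mul_le_mul_of_nonneg_right hm2 hββ.le, mul_le_mul_of_nonneg_right hn2 hαα.le]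
  rcases hmn with h | h
  · have := C.reflect_mem β hβ α hα
    rwa [reflRoot_apply, hm, h, Int.cast_neg, Int.cast_one, neg_one_smul, sub_neg_eq_add] at this
  · have := C.reflect_mem α hα β hβ
    rwa [reflRoot_apply, real_inner_comm, hn, h, Int.cast_neg, Int.cast_one, neg_one_smul,
      sub_neg_eq_add, add_comm] at this

def IsAddClosed (P : Set V) : Prop :=
  P ⊆ C.pos ∧ ∀ α ∈ P, ∀ β ∈ P, α + β ∈ C.roots → α + β ∈ P

variable {C} {P : Set V}

theorem IsAddClosed.finite (hP : C.IsAddClosed P) : P.Finite :=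
  C.finite.subset (hP.1.trans C.pos_subset)

/-- If `s.sum = 0`, each `α ∈ s` pairs negatively with some `β` in the rest of `s`; merging them
into the root `α + β ∈ P` gives a shorter multiset with sum zero. -/
theorem IsAddClosed.multiset_sum_ne_zero (hP : C.IsAddClosed P) {s : Multiset V}
    (hs : ∀ x ∈ s, x ∈ P) (hs0 : s ≠ 0) : s.sum ≠ 0 := by
  classical
  induction hn : s.card using Nat.strong_induction_on generalizing s with
  | _ n ih =>
  intro hsum
  obtain ⟨α, hα⟩ := Multiset.exists_mem_of_ne_zero hs0
  have hαP := hs α hα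
  have hαα := C.inner_self_pos (C.pos_subset (hP.1 hαP))
  rw [← Multiset.sum_erase hα] at hsum
  obtain ⟨β, hβ, hαβ⟩ : ∃ β ∈ s.erase α, ⟪α, β⟫ < 0 := by
    by_contra! h
    have : 0 ≤ ⟪α, (s.erase α).sum⟫ :=
      Multiset.sum_induction (fun x => 0 ≤ ⟪α, x⟫) _ (fun x y hx hy => by
        rw [inner_add_right]; positivity) (by simp) h
    rw [eq_neg_of_add_eq_zero_right hsum, inner_neg_right] at this
    linarith
  have hβP := hs β (Multiset.mem_of_mem_erase hβ)
  have hαβP : α + β ∈ P := hP.2 α hαP β hβP <|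
    C.add_mem_roots_of_inner_neg (C.pos_subset (hP.1 hαP)) (C.pos_subset (hP.1 hβP)) hαβ
      (C.add_ne_zero_of_mem_pos (hP.1 hαP) (hP.1 hβP))
  refine ih _ ?_ (s := (α + β) ::ₘ (s.erase α).erase β) ?_ Multiset.cons_ne_zero rfl ?_
  · rw [Multiset.card_cons, Multiset.card_erase_add_one hβ, ← hn]
    exact Multiset.card_erase_lt_of_mem hα
  · intro x hx
    rcases Multiset.mem_cons.1 hx with rfl | hx
    · exact hαβP
    · exact hs x (Multiset.mem_of_mem_erase (Multiset.mem_of_mem_erase hx))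
  · rw [Multiset.sum_cons, ← hsum, ← Multiset.sum_erase hβ, add_assoc]

/-- If not, iterating `x ↦ x + d x` (with `d x ∈ P`) inside the finite set `P` returns to a previous point,
and the increments in between form a nonempty multiset of elements of `P` with sum zero. -/
theorem IsAddClosed.exists_forall_add_notMem (hP : C.IsAddClosed P) (hne : P.Nonempty) :
    ∃ α ∈ P, ∀ β ∈ P, α + β ∉ P := by
  by_contra! h
  choose! d hdP hd using h
  obtain ⟨x₀, hx₀⟩ := hne
  set x : ℕ → V := fun n => (fun y => y + d y)^[n] x₀
  have hx_succ (n : ℕ) : x (n + 1) = x n + d (x n) :=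
    Function.iterate_succ_apply' (fun y => y + d y) n x₀
  have hxP (n : ℕ) : x n ∈ P := by
    induction n with
    | zero => exact hx₀
    | succ n ihn => exact hx_succ n ▸ hd _ ihn
  obtain ⟨i, j, hij, hxij⟩ := hP.finite.exists_lt_map_eq_of_forall_mem hxP
  have htel (j : ℕ) (hj : i ≤ j) : x j = x i + ∑ m ∈ Finset.Ico i j, d (x m) := by
    induction j, hj using Nat.le_induction with
    | base => simp
    | succ j hj ihj => rw [hx_succ, Finset.sum_Ico_succ_top hj, ← add_assoc, ← ihj]
  refine hP.multiset_sum_ne_zero (s := (Finset.Ico i j).val.map (d ∘ x)) ?_ ?_ ?_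
  · simp only [Multiset.mem_map, Finset.mem_val, Function.comp_apply]
    rintro _ ⟨m, -, rfl⟩
    exact hdP _ (hxP m)
  · simpa using hij
  · simpa [hxij] using (htel j hij.le).symm

theorem IsAddClosed.exists_forall_inner_nonneg (hP : C.IsAddClosed P) (hne : P.Nonempty) :
    ∃ α ∈ P, ∀ β ∈ P, 0 ≤ ⟪α, β⟫ := by
  obtain ⟨α, hα, hmax⟩ := hP.exists_forall_add_notMem hne
  refine ⟨α, hα, fun β hβ => not_lt.1 fun hαβ => hmax β hβ (hP.2 α hα β hβ ?_)⟩
  exact C.add_mem_roots_of_inner_neg (C.pos_subset (hP.1 hα)) (C.pos_subset (hP.1 hβ)) hαβ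
    (C.add_ne_zero_of_mem_pos (hP.1 hα) (hP.1 hβ))

/-- Take `α ∈ P` pairing nonnegatively with `P`, a vector `v₀` for the smaller closed set
`P ∩ α⊥`, and then `N • α + v₀` for `N` large. -/
theorem IsAddClosed.exists_forall_inner_pos (hP : C.IsAddClosed P) :
    ∃ v : V, ∀ γ ∈ P, 0 < ⟪γ, v⟫ := by
  induction hn : P.ncard using Nat.strong_induction_on generalizing P with
  | _ n ih =>
  rcases P.eq_empty_or_nonempty with rfl | hne
  · exact ⟨0, by simp⟩
  obtain ⟨α, hα, hαP⟩ := hP.exists_forall_inner_nonneg hne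
  set P₀ := {γ ∈ P | ⟪γ, α⟫ = 0}
  have hP₀ : C.IsAddClosed P₀ := by
    refine ⟨fun γ hγ => hP.1 hγ.1, fun γ hγ δ hδ hγδ => ⟨hP.2 γ hγ.1 δ hδ.1 hγδ, ?_⟩⟩
    rw [inner_add_left, hγ.2, hδ.2, add_zero]
  have hP₀_lt : P₀.ncard < n := hn ▸ Set.ncard_lt_ncard
    ⟨Set.sep_subset _ _, fun h => (C.inner_self_pos (C.pos_subset (hP.1 hα))).ne' (h hα).2⟩
    hP.finite
  obtain ⟨v₀, hv₀⟩ := ih _ hP₀_lt hP₀ rfl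
  obtain ⟨N, hN⟩ := exists_forall_inner_smul_add_pos hP.finite
    (fun γ hγ => real_inner_comm α γ ▸ hαP γ hγ) fun γ hγ h => hv₀ γ ⟨hγ, h⟩
  exact ⟨N • α + v₀, hN⟩

variable (C)

theorem exists_forall_inner_pos : ∃ v : V, ∀ γ ∈ C.pos, 0 < ⟪γ, v⟫ :=
  IsAddClosed.exists_forall_inner_pos ⟨subset_rfl, C.pos_add⟩

variable {v : V}

theorem mem_pos_iff_inner_pos (hv : ∀ γ ∈ C.pos, 0 < ⟪γ, v⟫) (hα : α ∈ C.roots) :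
    α ∈ C.pos ↔ 0 < ⟪α, v⟫ := by
  refine ⟨hv α, fun h => (C.mem_pos_or α hα).resolve_right fun hneg => ?_⟩
  have := hv _ hneg
  rw [inner_neg_left] at this
  linarith

theorem neg_mem_pos_iff_inner_neg (hv : ∀ γ ∈ C.pos, 0 < ⟪γ, v⟫) (hα : α ∈ C.roots) :
    -α ∈ C.pos ↔ ⟪α, v⟫ < 0 := by
  rw [C.mem_pos_iff_inner_pos hv (C.neg_mem_roots hα), inner_neg_left, neg_pos]

variable {l : V}

/-- A counterexample `β` of minimal height `⟪β, v⟫` cannot be simple, and writing it as a sum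
of two positive roots produces a counterexample of smaller height. -/
theorem IsDominant.inner_nonneg {C : RootSystemCtx V} (hl : C.IsDominant l) (hβ : β ∈ C.pos) :
    0 ≤ ⟪l, β⟫ := by
  obtain ⟨v, hv⟩ := C.exists_forall_inner_pos
  by_contra! hneg
  obtain ⟨γ, ⟨hγ, hγl⟩, hmin⟩ := Set.exists_min_image {γ ∈ C.pos | ⟪l, γ⟫ < 0} (⟪·, v⟫)
    (C.finite.subset fun γ hγ => C.pos_subset hγ.1) ⟨β, hβ, hneg⟩
  by_cases hsimple : γ ∈ C.simpleRoots
  · obtain ⟨k, hk⟩ := hl γ hsimple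
    have hγγ := C.inner_self_pos (C.pos_subset hγ)
    have : 0 ≤ 2 * ⟪l, γ⟫ / ⟪γ, γ⟫ := hk ▸ k.cast_nonneg
    rw [le_div_iff₀ hγγ, zero_mul] at this
    linarith
  · obtain ⟨γ₁, hγ₁, γ₂, hγ₂, rfl⟩ : ∃ γ₁ ∈ C.pos, ∃ γ₂ ∈ C.pos, γ = γ₁ + γ₂ :=
      not_not.1 fun h => hsimple ⟨hγ, h⟩
    have h₁ := hv γ₁ hγ₁
    have h₂ := hv γ₂ hγ₂
    rw [inner_add_right] at hγl
    rw [inner_add_left] at hmin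
    rcases lt_or_ge ⟪l, γ₁⟫ 0 with h | h
    · linarith [hmin γ₁ ⟨hγ₁, h⟩]
    · linarith [hmin γ₂ ⟨hγ₂, by linarith⟩]

theorem mapsTo_roots_of_mem_weylGroup {g : V ≃ₗᵢ[ℝ] V} (hg : g ∈ C.weylGroup) :
    Set.MapsTo g C.roots C.roots := by
  induction hg using Subgroup.closure_induction_left with
  | one => exact Set.mapsTo_id _
  | mul_left x hx y _ ih =>
    obtain ⟨α, hα, rfl⟩ := hx
    exact (C.mapsTo_reflRoot hα).comp ih
  | inv_mul_cancel x hx y _ ih =>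
    obtain ⟨α, hα, rfl⟩ := hx
    rw [inv_eq_of_mul_eq_one_right (reflRoot_mul_self α)]
    exact (C.mapsTo_reflRoot hα).comp ih

/-- `γ ↦ if s_β γ ∈ Δ⁺ then s_β γ else γ` injects `Φ_w` into `Φ_{w s_β}`, missing `β`. -/
theorem invLen_lt_invLen_mul_reflRoot {w : V ≃ₗᵢ[ℝ] V} (hw : Set.MapsTo w C.roots C.roots)
    (hβ : β ∈ C.pos) (hwβ : w β ∈ C.pos) : invLen C.pos w < invLen C.pos (w * reflRoot β) := by
  classical
  obtain ⟨v, hv⟩ := C.exists_forall_inner_pos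
  have hβr := C.pos_subset hβ
  set s := reflRoot β
  have hss : ∀ γ, s (s γ) = γ := reflRoot_reflRoot β
  set f : V → V := fun γ => if s γ ∈ C.pos then s γ else γ
  have hmaps : Set.MapsTo f (invSet C.pos w) (invSet C.pos (w * s)) := by
    rintro γ ⟨hγ, hwγ⟩
    dsimp only [f]
    split_ifs with hsγ
    · refine ⟨hsγ, ?_⟩
      rwa [LinearIsometryEquiv.coe_mul, Function.comp_apply, hss]
    have hsγr := C.reflect_mem β hβr γ (C.pos_subset hγ)
    refine ⟨hγ, (C.neg_mem_pos_iff_inner_neg hv (hw hsγr)).2 ?_⟩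
    have hsγ' := (C.mem_pos_iff_inner_pos hv hsγr).not.1 hsγ
    have hwγ' := (C.neg_mem_pos_iff_inner_neg hv (hw (C.pos_subset hγ))).1 hwγ
    simp only [reflRoot_apply, map_sub, map_smul, inner_sub_left, real_inner_smul_left]
      at hsγ' ⊢
    nlinarith [hv γ hγ, hv β hβ, hv _ hwβ]
  have hinj : Set.InjOn f (invSet C.pos w) := by
    rintro γ₁ ⟨hγ₁, -⟩ γ₂ ⟨hγ₂, -⟩ h
    simp only [f] at h
    split_ifs at h with h₁ h₂ h₂
    · exact s.injective h
    · exact absurd (by rwa [← h, hss]) h₂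
    · exact absurd (by rwa [h, hss]) h₁
    · exact h
  have hβ_mem : β ∈ invSet C.pos (w * s) := by
    refine ⟨hβ, ?_⟩
    rwa [LinearIsometryEquiv.coe_mul, Function.comp_apply, reflRoot_self (C.nonzero β hβr),
      map_neg, neg_neg]
  have hβ_notMem : β ∉ f '' invSet C.pos w := by
    rintro ⟨γ, ⟨hγ, hwγ⟩, hfγ⟩
    simp only [f] at hfγ
    split_ifs at hfγ
    · have hγβ : γ = -β := by rw [← hss γ, hfγ, reflRoot_self (C.nonzero β hβr)]
      exact C.not_pos_and_neg β hβ (hγβ ▸ hγ)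
    · exact C.not_pos_and_neg _ hwβ (hfγ ▸ hwγ)
  calc invLen C.pos w = (f '' invSet C.pos w).ncard := hinj.ncard_image.symm
    _ < invLen C.pos (w * s) := Set.ncard_lt_ncard
        ⟨hmaps.image_subset, fun h => hβ_notMem (h hβ_mem)⟩
        (C.finite.subset fun γ hγ => C.pos_subset hγ.1)

theorem mem_pos_of_invLen_lt {b : V ≃ₗᵢ[ℝ] V} (hb : Set.MapsTo b C.roots C.roots)
    (hβ : β ∈ C.pos) (hlt : invLen C.pos b < invLen C.pos (b * reflRoot β)) : b β ∈ C.pos := by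
  refine (C.mem_pos_or _ (hb (C.pos_subset hβ))).resolve_right fun hneg => ?_
  have hbs : Set.MapsTo (b * reflRoot β) C.roots C.roots :=
    hb.comp (C.mapsTo_reflRoot (C.pos_subset hβ))
  have := C.invLen_lt_invLen_mul_reflRoot hbs hβ (by
    rwa [LinearIsometryEquiv.coe_mul, Function.comp_apply,
      reflRoot_self (C.nonzero β (C.pos_subset hβ)), map_neg])
  rw [mul_assoc, reflRoot_mul_self, mul_one] at this
  omega

theorem mapsTo_roots_of_bruhatLE {x y : V ≃ₗᵢ[ℝ] V} (hxy : bruhatLE C.roots C.pos x y)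
    (hx : Set.MapsTo x C.roots C.roots) : Set.MapsTo y C.roots C.roots := by
  induction hxy with
  | refl => exact hx
  | tail _ hbc ih =>
    obtain ⟨⟨α, hα, rfl⟩, -⟩ := hbc
    exact ih.comp (C.mapsTo_reflRoot hα)

theorem inner_sub_nonneg_of_bruhatLE (hv : ∀ γ ∈ C.pos, 0 < ⟪γ, v⟫)
    (hl : ∀ β ∈ C.pos, 0 ≤ ⟪l, β⟫) {x y : V ≃ₗᵢ[ℝ] V} (hxy : bruhatLE C.roots C.pos x y)
    (hx : Set.MapsTo x C.roots C.roots) : 0 ≤ ⟪x l - y l, v⟫ := by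
  induction hxy with
  | refl => simp
  | @tail b _ hxb hbc ih =>
    obtain ⟨⟨α, hα, rfl⟩, hlt⟩ := hbc
    obtain ⟨β, hβ, hβα⟩ := C.exists_mem_pos_reflRoot_eq hα
    rw [← hβα] at hlt ⊢
    have hbβ := C.mem_pos_of_invLen_lt (C.mapsTo_roots_of_bruhatLE hxb hx) hβ hlt
    have hstep : b l - (b * reflRoot β) l = (2 * ⟪l, β⟫ / ⟪β, β⟫) • b β := by
      rw [LinearIsometryEquiv.coe_mul, Function.comp_apply, ← map_sub, reflRoot_apply,
        sub_sub_cancel, map_smul]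
    have hc : 0 ≤ 2 * ⟪l, β⟫ / ⟪β, β⟫ :=
      div_nonneg (mul_nonneg zero_le_two (hl β hβ)) (C.inner_self_pos (C.pos_subset hβ)).le
    rw [← sub_add_sub_cancel, inner_add_left, hstep, real_inner_smul_left]
    nlinarith [hv _ hbβ]

end RootSystemCtx

theorem statement5_general {V : Type*} [NormedAddCommGroup V] [InnerProductSpace ℝ V]
    [FiniteDimensional ℝ V] (C : RootSystemCtx V) (k : ℕ)
    (w : Fin k → (V ≃ₗᵢ[ℝ] V)) (hw : ∀ i, w i ∈ C.weylGroup)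
    (hcover : C.pos = ⋃ i, invSet C.pos (w i))
    (u : V ≃ₗᵢ[ℝ] V)
    (hle : ∀ i, bruhatLE C.roots C.pos (w i) (w i * u))
    (l : V) (hl : C.IsDominant l) :
    ∀ α ∈ C.roots, ∀ t : ℝ, t ≠ 0 → l - u l ≠ t • α := by
  intro α hα t ht hμ
  obtain ⟨β, hβ, s, hs, hμ⟩ : ∃ β ∈ C.pos, ∃ s : ℝ, s ≠ 0 ∧ l - u l = s • β :=
    (C.mem_pos_or α hα).elim (fun h => ⟨α, h, t, ht, hμ⟩)
      fun h => ⟨-α, h, -t, neg_ne_zero.2 ht, by rw [hμ, neg_smul_neg]⟩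
  have hβr := C.pos_subset hβ
  have hlβ := hl.inner_nonneg hβ
  rcases hs.lt_or_gt with hs | hs
  · have hpos : 0 < ⟪l - u l, l⟫ := by
      rw [real_inner_sub_apply_self, hμ]
      have := smul_ne_zero hs.ne (C.nonzero β hβr)
      positivity
    rw [hμ, real_inner_smul_left, real_inner_comm] at hpos
    nlinarith
  · obtain ⟨v, hv⟩ := C.exists_forall_inner_pos
    obtain ⟨i, -, hi⟩ := Set.mem_iUnion.1 (hcover ▸ hβ)
    have h := C.inner_sub_nonneg_of_bruhatLE hv (fun _ => hl.inner_nonneg) (hle i)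
      (C.mapsTo_roots_of_mem_weylGroup (hw i))
    rw [LinearIsometryEquiv.coe_mul, Function.comp_apply, ← map_sub, hμ, map_smul,
      real_inner_smul_left] at h
    have hneg :=
      (C.neg_mem_pos_iff_inner_neg hv (C.mapsTo_roots_of_mem_weylGroup (hw i) hβr)).1 hi
    nlinarith

/-- if `Δ⁺ = Φ_{w_1} ⊔ ⋯ ⊔ Φ_{w_k}` and `u ∈ W` satisfies `w_i ≤ w_i u` for all
`i`, then for any dominant integral weight `λ`, the element `μ_λ = λ - uλ` is neither a root
nor a nonzero scalar multiple of a root. -/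
theorem statement5 {V : Type*} [NormedAddCommGroup V] [InnerProductSpace ℝ V]
    [FiniteDimensional ℝ V] (C : RootSystemCtx V) (k : ℕ)
    (w : Fin k → (V ≃ₗᵢ[ℝ] V)) (hw : ∀ i, w i ∈ C.weylGroup)
    (hcover : C.pos = ⋃ i, invSet C.pos (w i))
    (hdisj : ∀ i j, i ≠ j → Disjoint (invSet C.pos (w i)) (invSet C.pos (w j)))
    (u : V ≃ₗᵢ[ℝ] V) (hu : u ∈ C.weylGroup)
    (hle : ∀ i, bruhatLE C.roots C.pos (w i) (w i * u))
    (l : V) (hl : C.IsDominant l) :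
    ∀ α ∈ C.roots, ∀ t : ℝ, t ≠ 0 → l - u l ≠ t • α :=
  statement5_general C k w hw hcover u hle l hl

end
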